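/- arXiv:2402.00406 — 3 statements merged into one kernel-verified Lean document; each statement's English description precedes it below -/
import Mathlib

section
/- Let X and Y be Banach spaces, F : X → Y Fréchet differentiable, x̄ ∈ X, and A† , A bounded linear operators with A injective. Suppose there are constants Y₀, Z₀, Z₁ ≥ 0 and a function Z₂ : (0,∞) → [0,∞) such that ‖A F(x̄)‖_X ≤ Y₀, ‖Id − A A†‖ ≤ Z₀, ‖A(DF(x̄) − A†)‖ ≤ Z₁, and ‖A(DF(c) − DF(x̄))‖ ≤ Z₂(r) r for all c in the closed ball of radius r around x̄ and all r > 0. If there exists r₀ > 0 such that Z₂(r₀) r₀² − (1 − Z₀ − Z₁) r₀ + Y₀ < 0, then there exists a unique x̃ in the closed ball of radius r₀ around x̄ with F(x̃) = 0. -/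
/-- Newton–Kantorovich type theorem (radii polynomial approach). -/
theorem radii_polynomial {X Y : Type*}
    [NormedAddCommGroup X] [NormedSpace ℝ X] [CompleteSpace X]
    [NormedAddCommGroup Y] [NormedSpace ℝ Y] [CompleteSpace Y]
    (F : X → Y) (DF : X → X →L[ℝ] Y) (hF : ∀ x, HasFDerivAt F (DF x) x)
    (xb : X) (Adag : X →L[ℝ] Y) (A : Y →L[ℝ] X) (hA : Function.Injective A)
    (Y₀ Z₀ Z₁ : ℝ) (hY₀ : 0 ≤ Y₀) (hZ₀ : 0 ≤ Z₀) (hZ₁ : 0 ≤ Z₁)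
    (Z₂ : ℝ → ℝ) (hZ₂nonneg : ∀ r, 0 < r → 0 ≤ Z₂ r)
    (hbY : ‖A (F xb)‖ ≤ Y₀)
    (hbZ₀ : ‖ContinuousLinearMap.id ℝ X - A.comp Adag‖ ≤ Z₀)
    (hbZ₁ : ‖A.comp (DF xb - Adag)‖ ≤ Z₁)
    (hbZ₂ : ∀ r, 0 < r → ∀ c ∈ Metric.closedBall xb r, ‖A.comp (DF c - DF xb)‖ ≤ Z₂ r * r)
    (r₀ : ℝ) (hr₀ : 0 < r₀)
    (hp : Z₂ r₀ * r₀ ^ 2 - (1 - Z₀ - Z₁) * r₀ + Y₀ < 0) :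
    ∃! xt, xt ∈ Metric.closedBall xb r₀ ∧ F xt = 0 := by
  set κ : ℝ := Z₀ + Z₁ + Z₂ r₀ * r₀ with hκdef
  have hκ0 : 0 ≤ κ := by
    have := hZ₂nonneg r₀ hr₀
    positivity
  have hκr : Y₀ + κ * r₀ < r₀ := by nlinarith
  have hκ1 : κ < 1 := by nlinarith
  set T : X → X := fun x => x - A (F x) with hT
  have hderiv : ∀ x, HasFDerivAt T (ContinuousLinearMap.id ℝ X - A.comp (DF x)) x := by
    intro x
    exact (hasFDerivAt_id x).sub (A.hasFDerivAt.comp x (hF x))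
  have hbound : ∀ x ∈ Metric.closedBall xb r₀,
      ‖ContinuousLinearMap.id ℝ X - A.comp (DF x)‖ ≤ κ := by
    intro x hx
    have hid : ContinuousLinearMap.id ℝ X - A.comp (DF x)
        = (ContinuousLinearMap.id ℝ X - A.comp Adag) - A.comp (DF xb - Adag)
          - A.comp (DF x - DF xb) := by
      ext v
      simp [ContinuousLinearMap.comp_sub, ContinuousLinearMap.sub_apply]
    rw [hid]
    calc ‖(ContinuousLinearMap.id ℝ X - A.comp Adag) - A.comp (DF xb - Adag)
          - A.comp (DF x - DF xb)‖
        ≤ ‖(ContinuousLinearMap.id ℝ X - A.comp Adag) - A.comp (DF xb - Adag)‖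
          + ‖A.comp (DF x - DF xb)‖ := norm_sub_le _ _
      _ ≤ ‖ContinuousLinearMap.id ℝ X - A.comp Adag‖ + ‖A.comp (DF xb - Adag)‖
          + ‖A.comp (DF x - DF xb)‖ := by
            gcongr
            exact norm_sub_le _ _
      _ ≤ Z₀ + Z₁ + Z₂ r₀ * r₀ := by
            gcongr
            exact hbZ₂ r₀ hr₀ x hx
  have hlip : ∀ x ∈ Metric.closedBall xb r₀, ∀ y ∈ Metric.closedBall xb r₀,
      ‖T y - T x‖ ≤ κ * ‖y - x‖ := by
    intro x hx y hy
    exact (convex_closedBall xb r₀).norm_image_sub_le_of_norm_hasFDerivWithin_le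
      (fun z hz => (hderiv z).hasFDerivWithinAt) hbound hx hy
  have hTxb : ‖T xb - xb‖ ≤ Y₀ := by
    simp only [hT]
    simpa using hbY
  have hmaps : ∀ x ∈ Metric.closedBall xb r₀, T x ∈ Metric.closedBall xb r₀ := by
    intro x hx
    rw [Metric.mem_closedBall, dist_eq_norm]
    calc ‖T x - xb‖ ≤ ‖T x - T xb‖ + ‖T xb - xb‖ := by
          have := norm_sub_le_norm_sub_add_norm_sub (T x) (T xb) xb
          linarith [norm_add_le (T x - T xb) (T xb - xb),
            congrArg norm (sub_add_sub_cancel (T x) (T xb) xb)]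
      _ ≤ κ * ‖x - xb‖ + Y₀ := by
          gcongr
          exact hlip xb (Metric.mem_closedBall_self hr₀.le) x hx
      _ ≤ κ * r₀ + Y₀ := by
          gcongr
          rw [← dist_eq_norm] at *
          exact hx
      _ ≤ r₀ := by linarith
  -- set up the contraction on the closed ball
  set s := Metric.closedBall xb r₀ with hs
  have hsne : s.Nonempty := ⟨xb, Metric.mem_closedBall_self hr₀.le⟩
  have hsclosed : IsClosed s := Metric.isClosed_closedBall
  haveI : CompleteSpace s := hsclosed.completeSpace_coe
  haveI : Nonempty s := hsne.to_subtype
  set f : s → s := fun x => ⟨T x.1, hmaps x.1 x.2⟩ with hf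
  have hcontr : ContractingWith κ.toNNReal f := by
    constructor
    · rwa [← NNReal.coe_lt_one, Real.coe_toNNReal _ hκ0]
    · apply LipschitzWith.of_dist_le_mul
      intro x y
      rw [Real.coe_toNNReal _ hκ0]
      simp only [hf, Subtype.dist_eq, dist_eq_norm]
      exact hlip y.1 y.2 x.1 x.2
  set xt : s := hcontr.fixedPoint f with hxt
  have hfix : T xt.1 = xt.1 := congrArg Subtype.val (hcontr.fixedPoint_isFixedPt)
  have hFxt : F xt.1 = 0 := by
    have : A (F xt.1) = A 0 := by
      have h0 : A (F xt.1) = 0 := by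
        have := hfix
        simp only [hT] at this
        have := sub_eq_self.mp this
        exact this
      simpa using h0
    exact hA this
  refine ⟨xt.1, ⟨xt.2, hFxt⟩, ?_⟩
  rintro y ⟨hy, hFy⟩
  have hTy : T y = y := by simp [hT, hFy]
  have hd : ‖y - xt.1‖ ≤ κ * ‖y - xt.1‖ := by
    calc ‖y - xt.1‖ = ‖T y - T xt.1‖ := by rw [hTy, hfix]
      _ ≤ κ * ‖y - xt.1‖ := hlip xt.1 xt.2 y hy
  have : ‖y - xt.1‖ ≤ 0 := by nlinarith [norm_nonneg (y - xt.1)]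
  have := le_antisymm this (norm_nonneg _)
  rwa [norm_sub_eq_zero_iff] at this
end

section
/- Let γ ∈ (0,1), ξ ∈ (0,1], and μ_k < 0 for all k ∉ F_m with μ* := max_{k∉F_m} μ_k < 0. Suppose C_∞ := (γ/(eξ))^γ · sup_{k∉F_m} (kL)^q / |μ_k|^γ is finite, where (kL)^q ≥ 0 and q ≥ 0. Then for all t > 0 and all sequences ψ ∈ ℓ¹_ω, ‖e^{L_∞ t} Q ψ^{(∞)}‖_ω ≤ C_∞ t^{−γ} e^{−(1−ξ)|μ*| t} ‖ψ^{(∞)}‖_ω, where (Qψ)_k = (kL)^q ψ_k and (e^{L_∞ t}φ)_k = e^{μ_k t} φ_k for k ∉ F_m, 0 otherwise. -/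
open scoped BigOperators

lemma key_rpow_exp (γ c x : ℝ) (hγ : 0 < γ) (hc : 0 < c) (hx : 0 < x) :
    x ^ γ * Real.exp (-(c * x)) ≤ (γ / (Real.exp 1 * c)) ^ γ := by
  have h1 : (0:ℝ) < γ / (Real.exp 1 * c) := by positivity
  have hL : (0:ℝ) < x ^ γ * Real.exp (-(c * x)) := by positivity
  rw [← Real.log_le_log_iff hL (Real.rpow_pos_of_pos h1 γ)]
  rw [Real.log_mul (by positivity) (Real.exp_ne_zero _), Real.log_rpow hx, Real.log_exp,
    Real.log_rpow h1, Real.log_div (ne_of_gt hγ) (by positivity),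
    Real.log_mul (Real.exp_ne_zero 1) (ne_of_gt hc), Real.log_exp]
  have h2 := Real.log_le_sub_one_of_pos (show (0:ℝ) < c * x / γ by positivity)
  rw [Real.log_div (by positivity) (ne_of_gt hγ), Real.log_mul (ne_of_gt hc) (ne_of_gt hx)] at h2
  have h3 := mul_le_mul_of_nonneg_left h2 hγ.le
  have hdiv : γ * (c * x / γ) = c * x := by field_simp
  nlinarith [h3, hdiv]

/-- Smoothing estimate for the diagonal tail semigroup composed with the
multiplication operator `Q`:
`‖e^{L_∞ t} Q ψ^{(∞)}‖_ω ≤ C_∞ t^{−γ} e^{−(1−ξ)|μ*| t} ‖ψ^{(∞)}‖_ω`. -/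
theorem tail_semigroup_smoothing (d : ℕ) (L : Fin d → ℝ) (hL : ∀ j, 0 < L j)
    (ω : (Fin d → ℕ) → ℝ) (hω : ∀ k, 0 < ω k)
    (m : Fin d → ℕ) (μ : (Fin d → ℕ) → ℝ) (μstar : ℝ)
    (γ ξ q Cinf : ℝ) (hγ₀ : 0 < γ) (hγ₁ : γ < 1) (hξ₀ : 0 < ξ) (hξ₁ : ξ ≤ 1) (hq : 0 ≤ q)
    (hneg : ∀ k, ¬(∀ j, k j < m j) → μ k < 0)
    (hμstar : ∀ k, ¬(∀ j, k j < m j) → μ k ≤ μstar) (hμstarneg : μstar < 0)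
    (hC : ∀ k, ¬(∀ j, k j < m j) →
      (γ / (Real.exp 1 * ξ)) ^ γ *
        ((Real.sqrt (∑ j, ((k j : ℝ) * L j) ^ 2)) ^ q / |μ k| ^ γ) ≤ Cinf)
    (ψ : (Fin d → ℕ) → ℝ) (hψ : Summable fun k => |ψ k| * ω k)
    (t : ℝ) (ht : 0 < t) :
    ∑' k, |(if ∀ j, k j < m j then (0:ℝ)
        else Real.exp (μ k * t) * ((Real.sqrt (∑ j, ((k j : ℝ) * L j) ^ 2)) ^ q * ψ k))| * ω k ≤
      Cinf * t ^ (-γ) * Real.exp (-(1 - ξ) * |μstar| * t) *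
        ∑' k, |(if ∀ j, k j < m j then (0:ℝ) else ψ k)| * ω k := by
  classical
  set C := Cinf * t ^ (-γ) * Real.exp (-(1 - ξ) * |μstar| * t) with hCdef
  have hg : Summable (fun k => |(if ∀ j, k j < m j then (0:ℝ) else ψ k)| * ω k) := by
    apply hψ.of_nonneg_of_le (fun k => mul_nonneg (abs_nonneg _) (hω k).le)
    intro k
    by_cases h : ∀ j, k j < m j <;> simp [h] <;>
      exact mul_nonneg (abs_nonneg _) (hω k).le
  have hterm : ∀ k, |(if ∀ j, k j < m j then (0:ℝ)
        else Real.exp (μ k * t) * ((Real.sqrt (∑ j, ((k j : ℝ) * L j) ^ 2)) ^ q * ψ k))| * ω k ≤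
      C * (|(if ∀ j, k j < m j then (0:ℝ) else ψ k)| * ω k) := by
    intro k
    by_cases h : ∀ j, k j < m j
    · simp [h]
    · simp only [if_neg h]
      set S := Real.sqrt (∑ j, ((k j : ℝ) * L j) ^ 2) with hSdef
      have hS : 0 ≤ S := Real.sqrt_nonneg _
      have hSq : 0 ≤ S ^ q := Real.rpow_nonneg hS q
      have ha : 0 < -μ k := by linarith [hneg k h]
      have habs : |μ k| = -μ k := abs_of_neg (hneg k h)
      have hkey : Real.exp (μ k * t) * S ^ q ≤ C := by
        have hA : (0:ℝ) < (-μ k) ^ γ := Real.rpow_pos_of_pos ha γ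
        have h1 : (-μ k) ^ γ * Real.exp (-((ξ * t) * (-μ k))) ≤
            (γ / (Real.exp 1 * (ξ * t))) ^ γ := key_rpow_exp γ (ξ * t) (-μ k) hγ₀ (by positivity) ha
        have hsplit : (γ / (Real.exp 1 * (ξ * t))) ^ γ = (γ / (Real.exp 1 * ξ)) ^ γ * t ^ (-γ) := by
          rw [show γ / (Real.exp 1 * (ξ * t)) = (γ / (Real.exp 1 * ξ)) * t⁻¹ by
              rw [show Real.exp 1 * (ξ * t) = Real.exp 1 * ξ * t by ring, ← div_div,
                div_eq_mul_inv],
            Real.mul_rpow (by positivity) (by positivity),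
            Real.inv_rpow ht.le, ← Real.rpow_neg ht.le]
        rw [hsplit] at h1
        have h2 : Real.exp (-((1 - ξ) * (-μ k) * t)) ≤ Real.exp (-(1 - ξ) * |μstar| * t) := by
          apply Real.exp_le_exp.mpr
          have hm : |μstar| = -μstar := abs_of_neg hμstarneg
          have hk : -μstar ≤ -μ k := by linarith [hμstar k h]
          rw [hm]
          nlinarith [mul_le_mul_of_nonneg_right
            (mul_le_mul_of_nonneg_left hk (sub_nonneg.mpr hξ₁)) ht.le]
        have h3 : (γ / (Real.exp 1 * ξ)) ^ γ * (S ^ q / |μ k| ^ γ) ≤ Cinf := hC k h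
        rw [habs] at h3
        have hexp : Real.exp (μ k * t) =
            Real.exp (-((ξ * t) * (-μ k))) * Real.exp (-((1 - ξ) * (-μ k) * t)) := by
          rw [← Real.exp_add]; ring_nf
        calc Real.exp (μ k * t) * S ^ q
            = ((-μ k) ^ γ * Real.exp (-((ξ * t) * (-μ k)))) *
              ((S ^ q / (-μ k) ^ γ) * Real.exp (-((1 - ξ) * (-μ k) * t))) := by
              rw [hexp]; field_simp
          _ ≤ ((γ / (Real.exp 1 * ξ)) ^ γ * t ^ (-γ)) *
              ((S ^ q / (-μ k) ^ γ) * Real.exp (-(1 - ξ) * |μstar| * t)) := by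
              apply mul_le_mul h1 (mul_le_mul_of_nonneg_left h2 (by positivity)) (by positivity)
                (by positivity)
          _ = ((γ / (Real.exp 1 * ξ)) ^ γ * (S ^ q / (-μ k) ^ γ)) *
              (t ^ (-γ) * Real.exp (-(1 - ξ) * |μstar| * t)) := by ring
          _ ≤ Cinf * (t ^ (-γ) * Real.exp (-(1 - ξ) * |μstar| * t)) := by
              apply mul_le_mul_of_nonneg_right h3 (by positivity)
          _ = C := by rw [hCdef]; ring
      calc |Real.exp (μ k * t) * (S ^ q * ψ k)| * ω k
          = (Real.exp (μ k * t) * S ^ q) * (|ψ k| * ω k) := by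
            rw [abs_mul, abs_of_pos (Real.exp_pos _), abs_mul, abs_of_nonneg hSq]; ring
        _ ≤ C * (|ψ k| * ω k) := mul_le_mul_of_nonneg_right hkey (mul_nonneg (abs_nonneg _) (hω k).le)
  have hCg : Summable (fun k => C * (|(if ∀ j, k j < m j then (0:ℝ) else ψ k)| * ω k)) :=
    hg.mul_left C
  calc ∑' k, |(if ∀ j, k j < m j then (0:ℝ)
        else Real.exp (μ k * t) * ((Real.sqrt (∑ j, ((k j : ℝ) * L j) ^ 2)) ^ q * ψ k))| * ω k
      ≤ ∑' k, C * (|(if ∀ j, k j < m j then (0:ℝ) else ψ k)| * ω k) :=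
        Summable.tsum_le_tsum hterm (Summable.of_nonneg_of_le (fun k => mul_nonneg (abs_nonneg _) (hω k).le) hterm hCg) hCg
    _ = C * ∑' k, |(if ∀ j, k j < m j then (0:ℝ) else ψ k)| * ω k := tsum_mul_left
end

section
/- Let ℓ¹_ω be the weighted ℓ¹ space over multi-indices with weights ω_k > 0, and let ā ∈ ℓ¹_ω. Define N(a) := −a∗a∗a (triple discrete convolution) with Fréchet derivative DN(ā)φ = −3 ā∗ā∗φ. Then for all ϱ > 0 and all a₁, a₂ in the closed ball of radius ϱ centered at ā: ‖N(a₁) − N(a₂) − DN(ā)(a₁ − a₂)‖_ω ≤ 3ϱ(2‖ā‖_ω + ϱ) ‖a₁ − a₂‖_ω. -/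
/-- Lipschitz-type estimate for the cubic nonlinearity `N(a) = −a³` in a
commutative Banach algebra (such as the weighted ℓ¹ convolution algebra):
`‖N(a₁) − N(a₂) − DN(ā)(a₁−a₂)‖ ≤ 3ϱ(2‖ā‖+ϱ)‖a₁−a₂‖` on the ball of radius ϱ. -/
theorem cubic_lipschitz_estimate {B : Type*} [NormedCommRing B] [CompleteSpace B]
    (abar : B) (ϱ : ℝ) (hϱ : 0 < ϱ) (a₁ a₂ : B)
    (h₁ : ‖a₁ - abar‖ ≤ ϱ) (h₂ : ‖a₂ - abar‖ ≤ ϱ) :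
    ‖(-(a₁ * a₁ * a₁)) - (-(a₂ * a₂ * a₂)) - (-(3 * (abar * abar) * (a₁ - a₂)))‖ ≤
      3 * ϱ * (2 * ‖abar‖ + ϱ) * ‖a₁ - a₂‖ := by
  have key : (-(a₁ * a₁ * a₁)) - (-(a₂ * a₂ * a₂)) - (-(3 * (abar * abar) * (a₁ - a₂)))
      = (a₂ - a₁) * ((a₁ - abar) * (a₁ + a₂ + abar) + (a₂ - abar) * (a₂ + 2 * abar)) := by
    ring
  rw [key]
  have hA : ‖a₁ + a₂ + abar‖ ≤ 2 * ϱ + 3 * ‖abar‖ := by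
    have e : a₁ + a₂ + abar = (a₁ - abar) + (a₂ - abar) + (abar + abar + abar) := by ring
    rw [e]
    have h3 : ‖abar + abar + abar‖ ≤ 3 * ‖abar‖ := by
      calc ‖abar + abar + abar‖ ≤ ‖abar + abar‖ + ‖abar‖ := norm_add_le _ _
        _ ≤ (‖abar‖ + ‖abar‖) + ‖abar‖ := by gcongr; exact norm_add_le _ _
        _ = 3 * ‖abar‖ := by ring
    calc ‖(a₁ - abar) + (a₂ - abar) + (abar + abar + abar)‖
        ≤ ‖(a₁ - abar) + (a₂ - abar)‖ + ‖abar + abar + abar‖ := norm_add_le _ _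
      _ ≤ (‖a₁ - abar‖ + ‖a₂ - abar‖) + 3 * ‖abar‖ := by gcongr; exact norm_add_le _ _
      _ ≤ 2 * ϱ + 3 * ‖abar‖ := by linarith
  have hBq : ‖a₂ + 2 * abar‖ ≤ ϱ + 3 * ‖abar‖ := by
    have e : a₂ + 2 * abar = (a₂ - abar) + (abar + abar + abar) := by ring
    rw [e]
    have h3 : ‖abar + abar + abar‖ ≤ 3 * ‖abar‖ := by
      calc ‖abar + abar + abar‖ ≤ ‖abar + abar‖ + ‖abar‖ := norm_add_le _ _
        _ ≤ (‖abar‖ + ‖abar‖) + ‖abar‖ := by gcongr; exact norm_add_le _ _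
        _ = 3 * ‖abar‖ := by ring
    calc ‖(a₂ - abar) + (abar + abar + abar)‖
        ≤ ‖a₂ - abar‖ + ‖abar + abar + abar‖ := norm_add_le _ _
      _ ≤ ϱ + 3 * ‖abar‖ := by linarith
  calc ‖(a₂ - a₁) * ((a₁ - abar) * (a₁ + a₂ + abar) + (a₂ - abar) * (a₂ + 2 * abar))‖
      ≤ ‖a₂ - a₁‖ * ‖(a₁ - abar) * (a₁ + a₂ + abar) + (a₂ - abar) * (a₂ + 2 * abar)‖ :=
        norm_mul_le _ _
    _ ≤ ‖a₂ - a₁‖ * (‖a₁ - abar‖ * ‖a₁ + a₂ + abar‖ + ‖a₂ - abar‖ * ‖a₂ + 2 * abar‖) := by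
        gcongr
        exact le_trans (norm_add_le _ _) (by gcongr <;> exact norm_mul_le _ _)
    _ ≤ 3 * ϱ * (2 * ‖abar‖ + ϱ) * ‖a₁ - a₂‖ := by
        rw [norm_sub_rev]
        have hb : (0:ℝ) ≤ ‖abar‖ := norm_nonneg _
        have hd : (0:ℝ) ≤ ‖a₁ - a₂‖ := norm_nonneg _
        have hAn : (0:ℝ) ≤ ‖a₁ + a₂ + abar‖ := norm_nonneg _
        have hBn : (0:ℝ) ≤ ‖a₂ + 2 * abar‖ := norm_nonneg _
        nlinarith [mul_le_mul h₁ hA hAn hϱ.le, mul_le_mul h₂ hBq hBn hϱ.le,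
          norm_nonneg (a₁ - abar), norm_nonneg (a₂ - abar)]
end
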